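/- Let b: Q → ℂ be square integrable on a cube Q ⊂ ℝⁿ with ∫_Q |b|² ≤ C|Q| and Re ∫_Q b ≥ |Q| (normalization ∫_Q b = |Q| suffices). Fix δ ∈ (0,1). Let {Q_i} be a collection of pairwise disjoint dyadic subcubes of Q that are maximal with respect to the property Re ∫_{Q_i} b ≤ δ|Q_i|. Then ∑ |Q_i| ≤ (1−η)|Q| for some η > 0 depending only on C and δ; specifically (1−δ)∑|Q_i| ≤ Re ∫_{⋃Q_i}(1−b) = −Re ∫_{Q \ ⋃Q_i}(1−b) ≤ C' |Q|^{1/2} |Q \ ⋃Q_i|^{1/2}, which forces |Q \ ⋃Q_i| ≥ η|Q|. -/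

import Mathlib

/-!
Put `E = ⋃ Qᵢ` and `f = 1 - b`. On each `Qᵢ` we have `Re ∫ f ≥ (1 - δ)|Qᵢ|`, so
`Re ∫_E f ≥ (1 - δ)|E|`, whereas `Re ∫_Q f ≤ 0`. The excess has to be cancelled on `Q \ E`, and
Cauchy–Schwarz together with `∫_Q |f|² ≤ 2(1 + C)|Q|` gives
`(1 - δ)²|E|² ≤ 2(1 + C)|Q| |Q \ E|`. Since `|Q \ E| = |Q| - |E|`, the set `E` cannot fill
more than a fraction `1 - (1 - δ)²/(8(1 + C))` of `Q`.
-/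

open MeasureTheory Set

/-- The axis-parallel closed cube in `ℝⁿ` with lower-left corner `a` and sidelength `l`. -/
def cube (n : ℕ) (a : Fin n → ℝ) (l : ℝ) : Set (Fin n → ℝ) :=
  {x | ∀ i, a i ≤ x i ∧ x i ≤ a i + l}

open Function

lemma cube_eq_pi (n : ℕ) (a : Fin n → ℝ) (l : ℝ) :
    cube n a l = univ.pi fun i => Icc (a i) (a i + l) := by
  ext x
  simp only [cube, mem_ofPred_eq, mem_pi, mem_univ, mem_Icc, forall_const]

lemma measurableSet_cube (n : ℕ) (a : Fin n → ℝ) (l : ℝ) : MeasurableSet (cube n a l) := by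
  rw [cube_eq_pi]
  exact .univ_pi fun _ => measurableSet_Icc

lemma volume_cube (n : ℕ) (a : Fin n → ℝ) {l : ℝ} (hl : 0 ≤ l) :
    volume (cube n a l) = ENNReal.ofReal (l ^ n) := by
  rw [cube_eq_pi, volume_pi_pi]
  simp [Real.volume_Icc, ← ENNReal.ofReal_pow hl]

lemma measureReal_cube (n : ℕ) (a : Fin n → ℝ) {l : ℝ} (hl : 0 ≤ l) :
    volume.real (cube n a l) = l ^ n := by
  rw [measureReal_def, volume_cube n a hl, ENNReal.toReal_ofReal (by positivity)]

section

variable {α : Type*} [MeasurableSpace α] {μ : Measure α}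

theorem sq_integral_norm_le_integral_sq_mul_measureReal {E : Type*} [NormedAddCommGroup E]
    [IsFiniteMeasure μ] {f : α → E} (hf : MemLp f 2 μ) :
    (∫ x, ‖f x‖ ∂μ) ^ 2 ≤ (∫ x, ‖f x‖ ^ 2 ∂μ) * μ.real univ := by
  have hHolder := integral_mul_le_Lp_mul_Lq_of_nonneg .two_two
    (ae_of_all μ fun x => norm_nonneg (f x)) (ae_of_all μ fun _ => zero_le_one)
    (by simpa using hf.norm) (by simpa using memLp_const (1 : ℝ))
  simp only [one_pow, mul_one, integral_const, smul_eq_mul, Real.rpow_two] at hHolder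
  rw [← Real.sqrt_eq_rpow, ← Real.sqrt_eq_rpow, ← Real.sqrt_mul (by positivity)] at hHolder
  calc (∫ x, ‖f x‖ ∂μ) ^ 2 ≤ (√((∫ x, ‖f x‖ ^ 2 ∂μ) * μ.real univ)) ^ 2 :=
        pow_le_pow_left₀ (integral_nonneg fun x => norm_nonneg _) hHolder 2
    _ = _ := Real.sq_sqrt (mul_nonneg (integral_nonneg fun x => by positivity) measureReal_nonneg)

theorem hasSum_measureReal_iUnion {ι : Type*} [Countable ι] {s : ι → Set α}
    (hs : ∀ i, MeasurableSet (s i)) (hd : Pairwise (Disjoint on s)) (hfin : μ (⋃ i, s i) ≠ ⊤) :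
    HasSum (fun i => μ.real (s i)) (μ.real (⋃ i, s i)) := by
  simpa using hasSum_integral_iUnion hs hd (integrableOn_const hfin (C := (1 : ℝ)))

theorem setIntegral_re_sub_const {b : α → ℂ} {s : Set α} (hb : IntegrableOn b s μ) (hs : μ s ≠ ⊤)
    (c : ℝ) : ∫ x in s, ((b x).re - c) ∂μ = (∫ x in s, b x ∂μ).re - c * μ.real s := by
  have hre_int : IntegrableOn (fun x => (b x).re) s μ := hb.re
  have hre : ∫ x in s, (b x).re ∂μ = (∫ x in s, b x ∂μ).re := integral_re hb
  rw [integral_sub hre_int (integrableOn_const hs), hre, setIntegral_const, smul_eq_mul, mul_comm]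

theorem re_setIntegral_iUnion_le {ι : Type*} [Countable ι] {s : ι → Set α} {b : α → ℂ} {δ : ℝ}
    (hs : ∀ i, MeasurableSet (s i)) (hd : Pairwise (Disjoint on s))
    (hb : IntegrableOn b (⋃ i, s i) μ) (hfin : μ (⋃ i, s i) ≠ ⊤)
    (h : ∀ i, (∫ x in s i, b x ∂μ).re ≤ δ * μ.real (s i)) :
    (∫ x in ⋃ i, s i, b x ∂μ).re ≤ δ * μ.real (⋃ i, s i) := by
  have hint : IntegrableOn (fun x => (b x).re - δ) (⋃ i, s i) μ :=
    hb.re.sub (integrableOn_const hfin)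
  have hsum := hasSum_integral_iUnion hs hd hint
  have hnonpos := hsum.nonpos fun i => by
    have hsub := subset_iUnion s i
    rw [setIntegral_re_sub_const (hb.mono_set hsub) (ne_top_of_le_ne_top hfin (measure_mono hsub))]
    linarith [h i]
  rw [setIntegral_re_sub_const hb hfin] at hnonpos
  linarith

theorem integral_norm_one_sub_sq_le [IsFiniteMeasure μ] {b : α → ℂ} (hb : MemLp b 2 μ) :
    ∫ x, ‖1 - b x‖ ^ 2 ∂μ ≤ 2 * μ.real univ + 2 * ∫ x, ‖b x‖ ^ 2 ∂μ := by
  have hb_sq : Integrable (fun x => ‖b x‖ ^ 2) μ := (memLp_two_iff_integrable_sq_norm hb.1).1 hb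
  have hf : MemLp (fun x => 1 - b x) 2 μ := (memLp_const 1).sub hb
  calc ∫ x, ‖1 - b x‖ ^ 2 ∂μ ≤ ∫ x, (2 + 2 * ‖b x‖ ^ 2) ∂μ := by
        refine integral_mono ((memLp_two_iff_integrable_sq_norm hf.1).1 hf)
          ((integrable_const 2).add (hb_sq.const_mul 2)) fun x => ?_
        have := norm_sub_le (1 : ℂ) (b x)
        rw [norm_one] at this
        nlinarith [norm_nonneg (1 - b x), sq_nonneg (‖b x‖ - 1)]
    _ = 2 * μ.real univ + 2 * ∫ x, ‖b x‖ ^ 2 ∂μ := by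
        rw [integral_add (integrable_const 2) (hb_sq.const_mul 2), integral_const,
          integral_const_mul, smul_eq_mul, mul_comm]

theorem sq_one_sub_mul_measureReal_le [IsFiniteMeasure μ] {b : α → ℂ} {C δ : ℝ} {E : Set α}
    (hδ : δ ≤ 1) (hb : MemLp b 2 μ) (hbC : ∫ x, ‖b x‖ ^ 2 ∂μ ≤ C * μ.real univ)
    (hb_re : μ.real univ ≤ (∫ x, b x ∂μ).re) (hE : MeasurableSet E)
    (hbE : (∫ x in E, b x ∂μ).re ≤ δ * μ.real E) :
    ((1 - δ) * μ.real E) ^ 2 ≤ 2 * (1 + C) * μ.real univ * μ.real Eᶜ := by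
  set f : α → ℂ := fun x => 1 - b x
  have hf : MemLp f 2 μ := (memLp_const 1).sub hb
  have hf_re : ∀ s, (∫ x in s, f x ∂μ).re = μ.real s - (∫ x in s, b x ∂μ).re := fun s => by
    rw [integral_sub (integrable_const 1) (hb.integrable one_le_two).integrableOn,
      setIntegral_const]
    simp
  have hf_nonpos : (∫ x, f x ∂μ).re ≤ 0 := by
    have := hf_re univ
    simp only [Measure.restrict_univ] at this
    linarith
  have hEc_lower : (1 - δ) * μ.real E ≤ ∫ x in Eᶜ, ‖f x‖ ∂μ := by
    rw [← integral_add_compl hE (hf.integrable one_le_two), Complex.add_re, hf_re E] at hf_nonpos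
    calc (1 - δ) * μ.real E ≤ -(∫ x in Eᶜ, f x ∂μ).re := by linarith
      _ ≤ ‖∫ x in Eᶜ, f x ∂μ‖ := (neg_le_abs _).trans (Complex.abs_re_le_norm _)
      _ ≤ ∫ x in Eᶜ, ‖f x‖ ∂μ := norm_integral_le_integral_norm f
  have hf_sq_int : Integrable (fun x => ‖f x‖ ^ 2) μ := (memLp_two_iff_integrable_sq_norm hf.1).1 hf
  have hf_sq : ∫ x, ‖f x‖ ^ 2 ∂μ ≤ 2 * (1 + C) * μ.real univ := by
    linarith [integral_norm_one_sub_sq_le hb]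
  calc ((1 - δ) * μ.real E) ^ 2 ≤ (∫ x in Eᶜ, ‖f x‖ ∂μ) ^ 2 :=
        pow_le_pow_left₀ (mul_nonneg (by linarith) measureReal_nonneg) hEc_lower 2
    _ ≤ (∫ x in Eᶜ, ‖f x‖ ^ 2 ∂μ) * μ.real Eᶜ := by
        simpa [measureReal_restrict_apply_univ] using
          sq_integral_norm_le_integral_sq_mul_measureReal (hf.restrict Eᶜ)
    _ ≤ (∫ x, ‖f x‖ ^ 2 ∂μ) * μ.real Eᶜ :=
        mul_le_mul_of_nonneg_right
          (setIntegral_le_integral hf_sq_int (ae_of_all _ fun x => by positivity)) measureReal_nonneg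
    _ ≤ _ := by gcongr

theorem sq_one_sub_mul_measureReal_le_of_subset {b : α → ℂ} {C δ : ℝ} {Q E : Set α}
    (hQ : μ Q ≠ ⊤) (hδ : δ ≤ 1) (hb : MemLp b 2 (μ.restrict Q))
    (hbC : ∫ x in Q, ‖b x‖ ^ 2 ∂μ ≤ C * μ.real Q) (hb_re : μ.real Q ≤ (∫ x in Q, b x ∂μ).re)
    (hE : MeasurableSet E) (hEQ : E ⊆ Q) (hbE : (∫ x in E, b x ∂μ).re ≤ δ * μ.real E) :
    ((1 - δ) * μ.real E) ^ 2 ≤ 2 * (1 + C) * μ.real Q * (μ.real Q - μ.real E) := by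
  have : IsFiniteMeasure (μ.restrict Q) := isFiniteMeasure_restrict.2 hQ
  have hE_real : (μ.restrict Q).real E = μ.real E := by
    rw [measureReal_restrict_apply hE, inter_eq_left.2 hEQ]
  have hE_int : ∫ x in E, b x ∂μ.restrict Q = ∫ x in E, b x ∂μ := by
    rw [Measure.restrict_restrict hE, inter_eq_left.2 hEQ]
  have key := sq_one_sub_mul_measureReal_le hδ hb (by rwa [measureReal_restrict_apply_univ])
    (by rwa [measureReal_restrict_apply_univ]) hE (by rwa [hE_int, hE_real])
  rwa [measureReal_compl hE, measureReal_restrict_apply_univ, hE_real] at key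

end

theorem le_one_sub_div_mul_of_sq_le {κ K S L : ℝ} (hK : 0 < K) (hκ : κ ^ 2 ≤ 2 * K)
    (hS : 0 ≤ S) (hL : 0 < L) (h : (κ * S) ^ 2 ≤ K * L * (L - S)) :
    S ≤ (1 - κ ^ 2 / (4 * K)) * L := by
  have hη : κ ^ 2 / (4 * K) ≤ 1 / 2 := by rw [div_le_iff₀ (by positivity)]; linarith
  rcases le_or_gt S (L / 2) with hSL | hSL
  · nlinarith
  · have hL_sq : L ^ 2 ≤ 4 * S ^ 2 := by nlinarith
    have : κ ^ 2 / (4 * K) * L ≤ L - S := by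
      rw [div_mul_eq_mul_div, div_le_iff₀ (by positivity)]
      nlinarith [mul_le_mul_of_nonneg_left hL_sq (sq_nonneg κ)]
    linarith

/-- Stopping-time lemma: if `b` is square integrable on a cube `Q` with `∫_Q |b|² ≤ C|Q|` and
`Re ∫_Q b ≥ |Q|`, and `Q_i` are pairwise disjoint subcubes of `Q` on which the averages of `b`
are small, `Re ∫_{Q_i} b ≤ δ|Q_i|`, then `∑|Q_i| ≤ (1-η)|Q|` for some `η > 0` depending only
on `C` and `δ`. -/
theorem bad_cubes_do_not_cover (C δ : ℝ) (hC : 0 < C) (hδ : δ ∈ Ioo (0 : ℝ) 1) :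
    ∃ η : ℝ, 0 < η ∧
      ∀ (n : ℕ) (a : Fin n → ℝ) (l : ℝ), 0 < l →
      ∀ b : (Fin n → ℝ) → ℂ,
        IntegrableOn b (cube n a l) volume →
        IntegrableOn (fun x => ‖b x‖ ^ 2) (cube n a l) volume →
        (∫ x in cube n a l, ‖b x‖ ^ 2) ≤ C * l ^ n →
        l ^ n ≤ (∫ x in cube n a l, b x).re →
        ∀ (c : ℕ → (Fin n → ℝ)) (s : ℕ → ℝ),
          (∀ i, 0 ≤ s i) →
          (∀ i, cube n (c i) (s i) ⊆ cube n a l) →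
          Pairwise (fun i j => Disjoint (cube n (c i) (s i)) (cube n (c j) (s j))) →
          (∀ i, (∫ x in cube n (c i) (s i), b x).re ≤ δ * (s i) ^ n) →
          (∑' i, (s i) ^ n) ≤ (1 - η) * l ^ n := by
  obtain ⟨hδ₀, hδ₁⟩ := hδ
  have hK : 0 < 2 * (1 + C) := by linarith
  refine ⟨(1 - δ) ^ 2 / (4 * (2 * (1 + C))), div_pos (by nlinarith) (by linarith), ?_⟩
  intro n a l hl b hb hb_sq hbC hb_re c s hs hsub hdisj hsmall
  have hQ_fin : volume (cube n a l) ≠ ⊤ := by simp [volume_cube n a hl.le]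
  have hE_sub : (⋃ i, cube n (c i) (s i)) ⊆ cube n a l := iUnion_subset hsub
  have hE_fin := ne_top_of_le_ne_top hQ_fin (measure_mono hE_sub)
  have hmeas : ∀ i, MeasurableSet (cube n (c i) (s i)) := fun i => measurableSet_cube _ _ _
  have hsum := hasSum_measureReal_iUnion hmeas hdisj hE_fin
  simp only [measureReal_cube _ _ (hs _)] at hsum
  have hbE := re_setIntegral_iUnion_le hmeas hdisj (hb.mono_set hE_sub) hE_fin fun i => by
    rw [measureReal_cube _ _ (hs i)]
    exact hsmall i
  rw [← measureReal_cube n a hl.le] at hbC hb_re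
  have key := sq_one_sub_mul_measureReal_le_of_subset hQ_fin hδ₁.le
    ((memLp_two_iff_integrable_sq_norm hb.1).2 hb_sq) hbC hb_re (.iUnion hmeas) hE_sub hbE
  rw [measureReal_cube n a hl.le, ← hsum.tsum_eq] at key
  exact le_one_sub_div_mul_of_sq_le hK (by nlinarith) (tsum_nonneg fun i => pow_nonneg (hs i) n)
    (pow_pos hl n) key
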